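/- arXiv:2307.03251 — 2 statements merged into one kernel-verified Lean document; each statement's English description precedes it below -/
import Mathlib

section
/- If a > 0, b > 0, c > 0 and c² ≥ 4ab, the Rössler system has exactly two equilibria when c² > 4ab and exactly one when c² = 4ab. -/
/-! Eliminating `y = -z` and `x = a z` reduces the equilibrium equations to the quadratic
`a z² - c z + b = 0`, whose discriminant is `c² - 4ab`; the equilibria are in bijection with its
roots, of which there are two when the discriminant is positive and one when it vanishes. -/

section Quadratic

variable {K : Type*} [Field K] [NeZero (2 : K)] {a b c : K}

theorem ncard_quadratic_roots_of_discrim_eq_mul_self (ha : a ≠ 0) {s : K}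
    (hd : discrim a b c = s * s) (hs : s ≠ 0) :
    {x : K | a * (x * x) + b * x + c = 0}.ncard = 2 := by
  have hroots :
      {x : K | a * (x * x) + b * x + c = 0} = {(-b + s) / (2 * a), (-b - s) / (2 * a)} := by
    ext x
    simp only [Set.mem_ofPred_eq, quadratic_eq_zero_iff ha hd, Set.mem_insert_iff,
      Set.mem_singleton_iff]
  have hne : (-b + s) / (2 * a) ≠ (-b - s) / (2 * a) := by
    intro heq
    rw [div_left_inj' (mul_ne_zero two_ne_zero ha)] at heq
    have h2s : 2 * s = 0 := by linear_combination heq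
    exact hs ((mul_eq_zero.mp h2s).resolve_left two_ne_zero)
  rw [hroots, Set.ncard_pair hne]

theorem ncard_quadratic_roots_of_discrim_eq_zero (ha : a ≠ 0) (hd : discrim a b c = 0) :
    {x : K | a * (x * x) + b * x + c = 0}.ncard = 1 := by
  simp only [quadratic_eq_zero_iff_of_discrim_eq_zero ha hd, Set.ofPred_eq_eq_singleton,
    Set.ncard_singleton]

end Quadratic

theorem ncard_quadratic_roots_of_discrim_pos {a b c : ℝ} (ha : a ≠ 0) (hd : 0 < discrim a b c) :
    {x : ℝ | a * (x * x) + b * x + c = 0}.ncard = 2 :=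
  ncard_quadratic_roots_of_discrim_eq_mul_self ha (Real.mul_self_sqrt hd.le).symm
    (Real.sqrt_pos.mpr hd).ne'

theorem rossler_equilibria_eq_image {R : Type*} [CommRing R] (a b c : R) :
    {p : R × R × R | -p.2.1 - p.2.2 = 0 ∧ p.1 + a * p.2.1 = 0 ∧
        b + p.1 * p.2.2 - c * p.2.2 = 0} =
      (fun z : R => (a * z, -z, z)) '' {z : R | a * (z * z) + -c * z + b = 0} := by
  ext ⟨x, y, z⟩
  simp only [Set.mem_ofPred_eq, Set.mem_image, Prod.mk.injEq]
  constructor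
  · rintro ⟨hy, hx, hz⟩
    obtain rfl : y = -z := by linear_combination -hy
    obtain rfl : x = a * z := by linear_combination hx
    exact ⟨z, by linear_combination hz, rfl, rfl, rfl⟩
  · rintro ⟨z, hz, rfl, rfl, rfl⟩
    exact ⟨by ring, by ring, by linear_combination hz⟩

theorem rossler_equilibria_count_general (a b c : ℝ) (ha : 0 < a) :
    (c ^ 2 > 4 * a * b →
      {p : ℝ × ℝ × ℝ | -p.2.1 - p.2.2 = 0 ∧ p.1 + a * p.2.1 = 0 ∧
        b + p.1 * p.2.2 - c * p.2.2 = 0}.ncard = 2) ∧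
    (c ^ 2 = 4 * a * b →
      {p : ℝ × ℝ × ℝ | -p.2.1 - p.2.2 = 0 ∧ p.1 + a * p.2.1 = 0 ∧
        b + p.1 * p.2.2 - c * p.2.2 = 0}.ncard = 1) := by
  have hinj : Function.Injective (fun z : ℝ => (a * z, -z, z)) :=
    fun _ _ h => congrArg (fun p : ℝ × ℝ × ℝ => p.2.2) h
  have hdiscrim : discrim a (-c) b = c ^ 2 - 4 * a * b := by rw [discrim]; ring
  rw [rossler_equilibria_eq_image, Set.ncard_image_of_injective _ hinj]
  exact ⟨fun hgt => ncard_quadratic_roots_of_discrim_pos ha.ne' (by linarith),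
    fun heq => ncard_quadratic_roots_of_discrim_eq_zero ha.ne' (by linarith)⟩

theorem rossler_equilibria_count (a b c : ℝ) (ha : 0 < a) (hb : 0 < b) (hc : 0 < c)
    (h : c ^ 2 ≥ 4 * a * b) :
    (c ^ 2 > 4 * a * b →
      {p : ℝ × ℝ × ℝ | -p.2.1 - p.2.2 = 0 ∧ p.1 + a * p.2.1 = 0 ∧
        b + p.1 * p.2.2 - c * p.2.2 = 0}.ncard = 2) ∧
    (c ^ 2 = 4 * a * b →
      {p : ℝ × ℝ × ℝ | -p.2.1 - p.2.2 = 0 ∧ p.1 + a * p.2.1 = 0 ∧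
        b + p.1 * p.2.2 - c * p.2.2 = 0}.ncard = 1) :=
  rossler_equilibria_count_general a b c ha
end

section
/- For n > m and ψ ∈ (0,1), the coefficient E_{ψ,m} = h^{ψ+1}·((N+1)^ψ(N+2+ψ) - N^ψ(N+2+2ψ))/(ψ(ψ+1)) with N = n - m and h > 0 is positive. -/
/-! Since `t ↦ t ^ (ψ + 1)` is convex, `(N + 1) ^ ψ * (N + 1) ≥ N ^ ψ * (N + 1 + ψ)` (tangent line at `N`,
i.e. Bernoulli's inequality); the remaining `(1 + ψ) * (N + 1) ^ ψ` strictly exceeds `(1 + ψ) * N ^ ψ`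
by monotonicity of `t ↦ t ^ ψ`. -/

open Real

lemma rpow_add_mul_rpow_sub_one_le_add_one_rpow {p x : ℝ} (hp : 1 ≤ p) (hx : 0 < x) :
    x ^ p + p * x ^ (p - 1) ≤ (x + 1) ^ p := by
  have bernoulli : 1 + p * x⁻¹ ≤ (1 + x⁻¹) ^ p :=
    one_add_mul_self_le_rpow_one_add (by linarith [inv_pos.mpr hx]) hp
  calc x ^ p + p * x ^ (p - 1) = x ^ p * (1 + p * x⁻¹) := by
        rw [rpow_sub_one hx.ne']; field_simp
    _ ≤ x ^ p * (1 + x⁻¹) ^ p := by gcongr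
    _ = (x + 1) ^ p := by
        rw [← mul_rpow hx.le (by positivity), mul_add, mul_inv_cancel₀ hx.ne', mul_one]

lemma adams_numerator_pos {ψ N : ℝ} (hψ : 0 < ψ) (hN : 0 < N) :
    0 < (N + 1) ^ ψ * (N + 2 + ψ) - N ^ ψ * (N + 2 + 2 * ψ) := by
  have tangent := rpow_add_mul_rpow_sub_one_le_add_one_rpow (p := ψ + 1) (by linarith) hN
  rw [add_sub_cancel_right, rpow_add_one hN.ne', rpow_add_one (by positivity)] at tangent
  have mono : N ^ ψ < (N + 1) ^ ψ := rpow_lt_rpow hN.le (lt_add_one N) hψ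
  nlinarith [mul_lt_mul_of_pos_left mono (by linarith : 0 < 1 + ψ)]

theorem adams_coefficient_pos (h ψ : ℝ) (hh : 0 < h) (hψ : ψ ∈ Set.Ioo (0:ℝ) 1)
    (n m : ℕ) (hnm : m < n) :
    0 < h ^ (ψ + 1) *
      (((n - m : ℝ) + 1) ^ ψ * ((n - m : ℝ) + 2 + ψ) -
        ((n - m : ℝ)) ^ ψ * ((n - m : ℝ) + 2 + 2 * ψ)) / (ψ * (ψ + 1)) := by
  have hψ0 : 0 < ψ := hψ.1
  have hN : (0 : ℝ) < n - m := sub_pos.mpr (by exact_mod_cast hnm)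
  exact div_pos (mul_pos (rpow_pos_of_pos hh _) (adams_numerator_pos hψ0 hN)) (by positivity)
end
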